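/- arXiv:2102.03821 — 2 statements merged into one kernel-verified Lean document; each statement's English description precedes it below -/
import Mathlib

section
/- Let w be a right-infinite word over alphabet {x_1,...,x_d}, A_w its factor algebra over ℚ, x = x_1 + ··· + x_d, and Φ_n : V_n → A_w the linear map u ↦ ux − xu, where V_n is the span of length-n factors. Then the kernel of Φ_n is exactly the one-dimensional subspace spanned by x^n. -/
variable {α : Type*}

/-- `u` occurs in the infinite word `w` at position `i`. -/
def FactorAt (w : ℕ → α) (i : ℕ) (u : List α) : Prop :=
  u = (List.range u.length).map fun k => w (i + k)

/-- The set of (finite) factors of the right-infinite word `w`. -/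
def Fac (w : ℕ → α) : Set (List α) := {u | ∃ i, FactorAt w i u}

/-- The relation defining the factor algebra: words that are not factors of `w`
are set to zero in the monoid algebra `ℚ⟨Σ*⟩`. -/
def FacAlgRel (w : ℕ → α) :
    MonoidAlgebra ℚ (FreeMonoid α) → MonoidAlgebra ℚ (FreeMonoid α) → Prop :=
  fun x y => ∃ u : FreeMonoid α, FreeMonoid.toList u ∉ Fac w ∧
    x = MonoidAlgebra.of ℚ (FreeMonoid α) u ∧ y = 0

/-- The factor algebra `A_w` of `w` over `ℚ`. -/
abbrev FacAlg (w : ℕ → α) := RingQuot (FacAlgRel w)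

/-- The image in the factor algebra of a word `u`. -/
noncomputable def facCls (w : ℕ → α) (u : List α) : FacAlg w :=
  RingQuot.mkAlgHom ℚ (FacAlgRel w) (MonoidAlgebra.of ℚ (FreeMonoid α) (FreeMonoid.ofList u))

/-- `V_n`: the span of the images of length-`n` factors of `w`. -/
noncomputable def Vspace (w : ℕ → α) (n : ℕ) : Submodule ℚ (FacAlg w) :=
  Submodule.span ℚ {x | ∃ u ∈ Fac w, u.length = n ∧ x = facCls w u}

/-- `W_n`: the span of commutators `ab - ba` with `a, b` factors of `w` and `|a|+|b| = n`. -/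
noncomputable def Wspace (w : ℕ → α) (n : ℕ) : Submodule ℚ (FacAlg w) :=
  Submodule.span ℚ {x | ∃ a ∈ Fac w, ∃ b ∈ Fac w, a.length + b.length = n ∧
    x = facCls w a * facCls w b - facCls w b * facCls w a}

/-!
Words that are not factors of `w` span an ideal of `ℚ⟨Σ*⟩`, since any word containing a non-factor
is itself a non-factor. Hence an element of `A_w` has well-defined coefficients at the factors of
`w`, and these determine it. If `u ∈ V_n` commutes with `x`, comparing the coefficients of `ux` and
`xu` at the factor `w_i ⋯ w_{i+n}` shows that `u` has the same coefficient at `w_i ⋯ w_{i+n-1}` as at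
`w_{i+1} ⋯ w_{i+n}`. So all coefficients of `u` at factors of length `n` agree, i.e. `u = c xⁿ`.
Finally `xⁿ ≠ 0`, as its coefficient at the prefix of length `n` of `w` is `1`.
-/

open MonoidAlgebra

namespace MonoidAlgebra

section Filter

variable {k M : Type*} [Semiring k] (P : M → Prop) [DecidablePred P]

def filter : k[M] →ₗ[k] k[M] where
  toFun f := ofCoeff (f.coeff.filter P)
  map_add' _ _ := MonoidAlgebra.ext Finsupp.filter_add
  map_smul' _ _ := MonoidAlgebra.ext Finsupp.filter_smul

lemma coeff_filter (f : k[M]) (m : M) :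
    (filter P f).coeff m = if P m then f.coeff m else 0 := rfl

lemma filter_add_filter_not (f : k[M]) : filter P f + filter (¬ P ·) f = f :=
  MonoidAlgebra.ext (Finsupp.filter_add_filter_not f.coeff P)

lemma filter_filter_not (f : k[M]) : filter P (filter (¬ P ·) f) = 0 := by
  ext m
  simp only [coeff_filter]
  split_ifs <;> simp_all

variable {P}

lemma filter_single_of_pos {m : M} (hm : P m) (r : k) : filter P (single m r) = single m r :=
  MonoidAlgebra.ext (Finsupp.filter_single_of_pos P hm)

lemma filter_single_of_neg {m : M} (hm : ¬ P m) (r : k) : filter P (single m r) = 0 :=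
  MonoidAlgebra.ext (Finsupp.filter_single_of_neg P hm)

variable [Mul M]

lemma filter_mul_eq_zero_left (hP : ∀ a b, P (a * b) → P a) {f : k[M]} (hf : filter P f = 0)
    (g : k[M]) : filter P (f * g) = 0 := by
  classical
  ext m
  rw [coeff_filter, coeff_mul]
  split_ifs with hm
  · refine Finset.sum_eq_zero fun a _ => Finset.sum_eq_zero fun b _ =>
      ite_eq_right_iff.mpr fun hab => ?_
    have hfa : (filter P f).coeff a = 0 := by rw [hf]; rfl
    rw [coeff_filter, if_pos (hP a b (hab ▸ hm))] at hfa
    rw [hfa, zero_mul]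
  · rfl

lemma filter_mul_eq_zero_right (hP : ∀ a b, P (a * b) → P b) {f : k[M]} (hf : filter P f = 0)
    (g : k[M]) : filter P (g * f) = 0 := by
  classical
  ext m
  rw [coeff_filter, coeff_mul]
  split_ifs with hm
  · refine Finset.sum_eq_zero fun a _ => Finset.sum_eq_zero fun b _ =>
      ite_eq_right_iff.mpr fun hab => ?_
    have hfb : (filter P f).coeff b = 0 := by rw [hf]; rfl
    rw [coeff_filter, if_pos (hP a b (hab ▸ hm))] at hfb
    rw [hfb, mul_zero]
  · rfl

lemma filter_filter_mul (hP : ∀ a b, P (a * b) → P a) (f g : k[M]) :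
    filter P (filter P f * g) = filter P (f * g) := by
  conv_rhs => rw [← filter_add_filter_not P f, add_mul, map_add,
    filter_mul_eq_zero_left hP (filter_filter_not P f), add_zero]

lemma filter_mul_filter (hP : ∀ a b, P (a * b) → P b) (f g : k[M]) :
    filter P (f * filter P g) = filter P (f * g) := by
  conv_rhs => rw [← filter_add_filter_not P g, mul_add, map_add,
    filter_mul_eq_zero_right hP (filter_filter_not P g), add_zero]

end Filter

end MonoidAlgebra

section LetterSum

variable (k : Type*) [Semiring k]

noncomputable def letterSum (α : Type*) [Fintype α] : k[FreeMonoid α] :=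
  ∑ a, of k (FreeMonoid α) (FreeMonoid.of a)

variable {k} [Fintype α]

lemma coeff_letterSum_mul_of_mul (f : k[FreeMonoid α]) (a : α) (m : FreeMonoid α) :
    (letterSum k α * f).coeff (FreeMonoid.of a * m) = f.coeff m := by
  classical
  rw [letterSum, Finset.sum_mul, coeff_sum, Finsupp.finsetSum_apply,
    Finset.sum_eq_single_of_mem a (Finset.mem_univ a)]
  · rw [of_apply, coeff_single_mul_mul, one_mul]
  · intro b _ hba
    refine coeff_single_mul_of_forall_mul_ne _ _ fun d h => hba ?_
    simpa using congrArg List.head? (congrArg FreeMonoid.toList h)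

lemma coeff_mul_letterSum_mul_of (f : k[FreeMonoid α]) (m : FreeMonoid α) (a : α) :
    (f * letterSum k α).coeff (m * FreeMonoid.of a) = f.coeff m := by
  classical
  rw [letterSum, Finset.mul_sum, coeff_sum, Finsupp.finsetSum_apply,
    Finset.sum_eq_single_of_mem a (Finset.mem_univ a)]
  · rw [of_apply, coeff_mul_single_mul, mul_one]
  · intro b _ hba
    refine coeff_mul_single_of_forall_mul_ne _ _ fun d h => hba ?_
    simpa using congrArg List.getLast? (congrArg FreeMonoid.toList h)

lemma coeff_letterSum_mul_one (f : k[FreeMonoid α]) : (letterSum k α * f).coeff 1 = 0 := by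
  rw [letterSum, Finset.sum_mul, coeff_sum, Finsupp.finsetSum_apply]
  refine Finset.sum_eq_zero fun a _ => coeff_single_mul_of_forall_mul_ne _ _ fun d h => ?_
  simpa using congrArg FreeMonoid.length h

lemma coeff_letterSum_pow (n : ℕ) (m : FreeMonoid α) :
    (letterSum k α ^ n).coeff m = if m.length = n then 1 else 0 := by
  induction n generalizing m with
  | zero => cases m using FreeMonoid.casesOn <;> simp [one_def, coeff_single]
  | succ n ih =>
    cases m using FreeMonoid.casesOn with
    | one => simp [pow_succ', coeff_letterSum_mul_one]
    | of_mul a m => simp [pow_succ', coeff_letterSum_mul_of_mul, ih, FreeMonoid.length_mul, add_comm 1]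

end LetterSum

section Window

variable (w : ℕ → α)

def window (i m : ℕ) : List α := (List.range m).map fun k => w (i + k)

lemma length_window (i m : ℕ) : (window w i m).length = m := by simp [window]

lemma window_mem_fac (i m : ℕ) : window w i m ∈ Fac w := ⟨i, by simp [FactorAt, window]⟩

lemma window_add (i m n : ℕ) : window w i (m + n) = window w i m ++ window w (i + m) n := by
  simp [window, List.range_add, Function.comp_def, add_assoc]

lemma window_succ (i n : ℕ) : window w i (n + 1) = window w i n ++ [w (i + n)] := by
  rw [window_add]
  simp [window]

lemma window_succ' (i n : ℕ) : window w i (n + 1) = w i :: window w (i + 1) n := by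
  rw [add_comm n, window_add]
  simp [window]

lemma fac_of_append_mem {u v : List α} (h : u ++ v ∈ Fac w) : u ∈ Fac w ∧ v ∈ Fac w := by
  obtain ⟨i, hi⟩ := h
  have hi' : u ++ v = window w i u.length ++ window w (i + u.length) v.length := by
    rw [← window_add, ← List.length_append]
    exact hi
  obtain ⟨hu, hv⟩ := List.append_inj hi' (length_window w i u.length).symm
  exact ⟨⟨i, hu⟩, ⟨i + u.length, hv⟩⟩

end Window

section FactorAlgebra

attribute [local instance] Classical.propDecidable

variable (w : ℕ → α)

def IsFac (u : FreeMonoid α) : Prop := u.toList ∈ Fac w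

variable {w} in
lemma IsFac.of_mul_left (u v : FreeMonoid α) (h : IsFac w (u * v)) : IsFac w u :=
  (fac_of_append_mem w h).1

variable {w} in
lemma IsFac.of_mul_right (u v : FreeMonoid α) (h : IsFac w (u * v)) : IsFac w v :=
  (fac_of_append_mem w h).2

lemma isFac_window (i n : ℕ) : IsFac w (FreeMonoid.ofList (window w i n)) :=
  window_mem_fac w i n

lemma filter_eq_of_rel {a b : ℚ[FreeMonoid α]} (h : RingQuot.Rel (FacAlgRel w) a b) :
    filter (IsFac w) a = filter (IsFac w) b := by
  induction h with
  | of h =>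
    obtain ⟨u, hu, rfl, rfl⟩ := h
    rw [of_apply, filter_single_of_neg (P := IsFac w) hu, map_zero]
  | add_left _ ih => rw [map_add, map_add, ih]
  | mul_left _ ih =>
    rw [← filter_filter_mul IsFac.of_mul_left, ih, filter_filter_mul IsFac.of_mul_left]
  | mul_right _ ih =>
    rw [← filter_mul_filter IsFac.of_mul_right, ih, filter_mul_filter IsFac.of_mul_right]

noncomputable def normalForm : FacAlg w →ₗ[ℚ] ℚ[FreeMonoid α] where
  toFun z := Quot.lift (filter (IsFac w)) (fun _ _ => filter_eq_of_rel w) z.toQuot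
  map_add' := by
    rintro ⟨⟨y⟩⟩ ⟨⟨z⟩⟩
    rw [RingQuot.add_quot]
    exact map_add _ y z
  map_smul' := by
    rintro c ⟨⟨z⟩⟩
    rw [RingQuot.smul_quot]
    exact map_smul _ c z

lemma normalForm_mk (p : ℚ[FreeMonoid α]) :
    normalForm w (RingQuot.mkAlgHom ℚ (FacAlgRel w) p) = filter (IsFac w) p := by
  rw [← AlgHom.coe_toRingHom, RingQuot.mkAlgHom_coe, RingQuot.mkRingHom_def]
  rfl

lemma mk_filter (p : ℚ[FreeMonoid α]) :
    RingQuot.mkAlgHom ℚ (FacAlgRel w) (filter (IsFac w) p) = RingQuot.mkAlgHom ℚ (FacAlgRel w) p := by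
  induction p using MonoidAlgebra.induction_linear with
  | zero => rw [map_zero]
  | add p q hp hq => simp only [map_add, hp, hq]
  | single u r =>
    by_cases hu : IsFac w u
    · rw [filter_single_of_pos hu]
    · have h := RingQuot.mkAlgHom_rel ℚ (s := FacAlgRel w) ⟨u, hu, rfl, rfl⟩
      rw [map_zero, of_apply] at h
      rw [filter_single_of_neg hu, map_zero, ← mul_one r, ← smul_eq_mul, ← smul_single, map_smul,
        h, smul_zero]

lemma mk_normalForm (z : FacAlg w) : RingQuot.mkAlgHom ℚ (FacAlgRel w) (normalForm w z) = z := by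
  obtain ⟨p, rfl⟩ := RingQuot.mkAlgHom_surjective ℚ (FacAlgRel w) z
  rw [normalForm_mk, mk_filter]

lemma coeff_normalForm_of_not_isFac (z : FacAlg w) {v : FreeMonoid α} (hv : ¬ IsFac w v) :
    (normalForm w z).coeff v = 0 := by
  obtain ⟨p, rfl⟩ := RingQuot.mkAlgHom_surjective ℚ (FacAlgRel w) z
  rw [normalForm_mk, coeff_filter, if_neg hv]

lemma coeff_normalForm_of_mem_Vspace {n : ℕ} {z : FacAlg w} (hz : z ∈ Vspace w n)
    {v : FreeMonoid α} (hv : v.length ≠ n) : (normalForm w z).coeff v = 0 := by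
  induction hz using Submodule.span_induction with
  | mem _ hx =>
    obtain ⟨u, -, rfl, rfl⟩ := hx
    rw [facCls, normalForm_mk, coeff_filter, of_apply, coeff_single, Finsupp.single_apply]
    split_ifs with _ huv
    · exact absurd (congrArg FreeMonoid.length huv).symm hv
    all_goals rfl
  | zero => rw [map_zero, coeff_zero, Finsupp.coe_zero, Pi.zero_apply]
  | add x y _ _ hx hy => rw [map_add, coeff_add, Finsupp.add_apply, hx, hy, add_zero]
  | smul c x _ hx => rw [map_smul, coeff_smul, Finsupp.smul_apply, hx, smul_zero]

variable [Fintype α]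

lemma sum_facCls_singleton :
    ∑ a : α, facCls w [a] = RingQuot.mkAlgHom ℚ (FacAlgRel w) (letterSum ℚ α) := by
  rw [letterSum, map_sum]
  rfl

lemma coeff_normalForm_window_succ {z : FacAlg w}
    (hz : z * ∑ a : α, facCls w [a] = (∑ a : α, facCls w [a]) * z) (i n : ℕ) :
    (normalForm w z).coeff (FreeMonoid.ofList (window w i n)) =
      (normalForm w z).coeff (FreeMonoid.ofList (window w (i + 1) n)) := by
  rw [sum_facCls_singleton] at hz
  set p := normalForm w z
  have hp : filter (IsFac w) (p * letterSum ℚ α) = filter (IsFac w) (letterSum ℚ α * p) := by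
    rw [← normalForm_mk, ← normalForm_mk, map_mul (RingQuot.mkAlgHom ℚ (FacAlgRel w)),
      map_mul (RingQuot.mkAlgHom ℚ (FacAlgRel w)), mk_normalForm, hz]
  have hcoeff := congrArg (·.coeff (FreeMonoid.ofList (window w i (n + 1)))) hp
  simp only [coeff_filter, if_pos (isFac_window w i (n + 1))] at hcoeff
  calc p.coeff (FreeMonoid.ofList (window w i n))
      = (p * letterSum ℚ α).coeff (FreeMonoid.ofList (window w i n) * FreeMonoid.of (w (i + n))) :=
        (coeff_mul_letterSum_mul_of p _ _).symm
    _ = (letterSum ℚ α * p).coeff (FreeMonoid.of (w i) * FreeMonoid.ofList (window w (i + 1) n)) := by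
        rw [← FreeMonoid.ofList_singleton, ← FreeMonoid.ofList_append, ← window_succ,
          ← FreeMonoid.ofList_cons, ← window_succ']
        exact hcoeff
    _ = p.coeff (FreeMonoid.ofList (window w (i + 1) n)) := coeff_letterSum_mul_of_mul p _ _

lemma coeff_normalForm_window {z : FacAlg w}
    (hz : z * ∑ a : α, facCls w [a] = (∑ a : α, facCls w [a]) * z) (i n : ℕ) :
    (normalForm w z).coeff (FreeMonoid.ofList (window w i n)) =
      (normalForm w z).coeff (FreeMonoid.ofList (window w 0 n)) := by
  induction i with
  | zero => rfl
  | succ i ih => rw [← coeff_normalForm_window_succ w hz, ih]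

lemma eq_smul_pow_of_commute {n : ℕ} {z : FacAlg w} (hzV : z ∈ Vspace w n)
    (hz : z * ∑ a : α, facCls w [a] = (∑ a : α, facCls w [a]) * z) :
    z = (normalForm w z).coeff (FreeMonoid.ofList (window w 0 n)) • (∑ a : α, facCls w [a]) ^ n := by
  set c := (normalForm w z).coeff (FreeMonoid.ofList (window w 0 n))
  have hnf : normalForm w z = filter (IsFac w) (c • letterSum ℚ α ^ n) := by
    ext v
    rw [coeff_filter]
    split_ifs with hv
    · rw [coeff_smul, Finsupp.smul_apply, coeff_letterSum_pow, smul_eq_mul]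
      split_ifs with hlen
      · obtain ⟨i, hi⟩ := hv
        have hvi : v = FreeMonoid.ofList (window w i n) := by rw [← hlen]; exact hi
        rw [hvi, coeff_normalForm_window w hz, mul_one]
      · rw [coeff_normalForm_of_mem_Vspace w hzV hlen, mul_zero]
    · exact coeff_normalForm_of_not_isFac w z hv
  rw [← mk_normalForm w z, hnf, mk_filter, map_smul, map_pow, sum_facCls_singleton]

lemma sum_facCls_singleton_pow_ne_zero (n : ℕ) : (∑ a : α, facCls w [a]) ^ n ≠ 0 := by
  have hcoeff : (normalForm w ((∑ a : α, facCls w [a]) ^ n)).coeff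
      (FreeMonoid.ofList (window w 0 n)) = 1 := by
    rw [sum_facCls_singleton, ← map_pow, normalForm_mk, coeff_filter, if_pos (isFac_window w 0 n),
      coeff_letterSum_pow]
    exact if_pos (length_window w 0 n)
  intro h
  rw [h, map_zero] at hcoeff
  exact zero_ne_one hcoeff

end FactorAlgebra

theorem ker_phi_eq_span_xn [Fintype α] (w : ℕ → α) (n : ℕ) :
    (∀ z ∈ Vspace w n,
        (z * (∑ a : α, facCls w [a]) - (∑ a : α, facCls w [a]) * z = 0 ↔
          ∃ c : ℚ, z = c • (∑ a : α, facCls w [a]) ^ n)) ∧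
      (∑ a : α, facCls w [a]) ^ n ≠ 0 := by
  refine ⟨fun z hz => ⟨fun h => ⟨_, eq_smul_pow_of_commute w hz (sub_eq_zero.mp h)⟩, ?_⟩,
    sum_facCls_singleton_pow_ne_zero w n⟩
  rintro ⟨c, rfl⟩
  rw [smul_mul_assoc, mul_smul_comm, ← pow_succ, ← pow_succ', sub_self]
end

section
/- The Lie complexity of the Thue–Morse word t satisfies: L_t(n) = 1 if n = 0 or n = 2^k with k ≥ 3; L_t(n) = 2 if n ∈ {1, 4} or n = 3·2^k with k ≥ 0; L_t(n) = 3 if n = 2; and L_t(n) = 0 otherwise. -/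
variable {α : Type*}

/-- The Lie complexity: the number of rotation classes of length-`n` words all of
whose members are factors of `w`. -/
noncomputable def LieComplexity (w : ℕ → α) (n : ℕ) : ℕ :=
  Set.ncard {q : Quotient (List.IsRotated.setoid α) |
    ∃ u : List α, Quotient.mk _ u = q ∧ u.length = n ∧ ∀ v, u.IsRotated v → v ∈ Fac w}

/-- The Thue–Morse word: `t n` is the parity of the number of 1's in the binary
expansion of `n`. -/
def thueMorse (n : ℕ) : ℕ := (Nat.digits 2 n).count 1 % 2

/-!
Every factor of `t` is cut into blocks `t (2i) t (2i+1) ∈ {01, 10}`, so in an occurrence an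
equal adjacent pair `aa` sits at an odd position; and `t` contains neither a cube `aaa` nor a
word `ababa`. Let all rotations of `u`, of length `n ≥ 5`, be factors. Then `u` has a cyclic equal
pair, and looking at the rotations containing it next to another pair shows that every cyclic
pair at odd distance from it is unequal, and if `n` is odd, every other pair too, which
`ababa`-freeness forbids. So `n` is even and `u` is a rotation of `μ v`, where all rotations of
`v` are factors because an occurrence of `μ v'` at an odd position would have no equal adjacent
pair. Hence `L(n) = 0` once `n` has an odd divisor `≥ 5`. Conversely, if `x x` is a factor then
so is `μ x μ x`; so when every class of length `m ≥ 3` has a representative whose square is a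
factor, `μ` maps the classes of length `m` onto those of length `2m`, injectively since an odd
shift taking `μ x` to `μ y` would force a cube in `x`. This gives `L(2m) = L(m)` along
`m = 3·2^k` and `m = 2^k, k ≥ 3`, seeded by the classes of `010, 101` and of `μ 1001`; the
lengths `n ≤ 4` and `n = 8` are checked directly.
-/

attribute [local instance] List.IsRotated.setoid

theorem List.getElem_rotate_of_add_eq {l : List α} {k s j : ℕ} (hs : s < l.length)
    (hj : j < l.length) (h : s + k = j) : (l.rotate k)[s]'(by simpa) = l[j] := by
  simp only [List.getElem_rotate, h, Nat.mod_eq_of_lt hj]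

theorem List.getElem_rotate_of_add_eq_add_length {l : List α} {k s j : ℕ} (hs : s < l.length)
    (hj : j < l.length) (h : s + k = j + l.length) : (l.rotate k)[s]'(by simpa) = l[j] := by
  simp only [List.getElem_rotate, h, Nat.add_mod_right, Nat.mod_eq_of_lt hj]

theorem Nat.exists_eq_two_pow_mul_odd_of_ne {n : ℕ} (hn0 : n ≠ 0) (hpow : ∀ k, n ≠ 2 ^ k)
    (hpow3 : ∀ k, n ≠ 3 * 2 ^ k) : ∃ a m, Odd m ∧ 5 ≤ m ∧ n = 2 ^ a * m := by
  obtain ⟨a, m, hm, rfl⟩ := Nat.exists_eq_two_pow_mul_odd hn0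
  refine ⟨a, m, hm, ?_, rfl⟩
  obtain ⟨r, rfl⟩ := hm
  rcases (by omega : r = 0 ∨ r = 1 ∨ 2 ≤ r) with rfl | rfl | hr
  · exact absurd (mul_one _) (hpow a)
  · exact absurd (mul_comm _ _) (hpow3 a)
  · omega

section Factors

variable {w : ℕ → α} {u v : List α}

theorem factorAt_iff_getElem {i : ℕ} :
    FactorAt w i u ↔ ∀ k (hk : k < u.length), u[k] = w (i + k) := by
  refine ⟨fun h k hk => ?_, fun h => List.ext_getElem (by simp) fun k hk _ => by simp [h k hk]⟩
  rw [List.getElem_of_eq h]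
  simp

theorem FactorAt.getElem_eq {i : ℕ} (h : FactorAt w i u) {k : ℕ} (hk : k < u.length) :
    u[k] = w (i + k) :=
  factorAt_iff_getElem.1 h k hk

theorem mem_fac_of_isInfix (hu : u ∈ Fac w) (hvu : v <:+: u) : v ∈ Fac w := by
  obtain ⟨i, hi⟩ := hu
  obtain ⟨s, r, rfl⟩ := hvu
  refine ⟨i + s.length, factorAt_iff_getElem.2 fun k hk => ?_⟩
  have := hi.getElem_eq (k := s.length + k) (by simp; omega)
  rw [List.getElem_append_left (by simp; omega), List.getElem_append_right (by omega)] at this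
  simpa [add_assoc] using this

theorem map_range_mem_fac (w : ℕ → α) (n : ℕ) : (List.range n).map w ∈ Fac w :=
  ⟨0, by simp [FactorAt]⟩

def AllRotFac (w : ℕ → α) (u : List α) : Prop := ∀ v, u ~r v → v ∈ Fac w

theorem AllRotFac.mem_fac (h : AllRotFac w u) : u ∈ Fac w := h u (List.IsRotated.refl u)

theorem AllRotFac.rotate_mem_fac (h : AllRotFac w u) (k : ℕ) : u.rotate k ∈ Fac w :=
  h _ ⟨k, rfl⟩

theorem AllRotFac.of_isRotated (h : AllRotFac w u) (huv : u ~r v) : AllRotFac w v :=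
  fun x hx => h x (huv.trans hx)

theorem allRotFac_of_forall_rotate (h : ∀ k < u.length, u.rotate k ∈ Fac w) :
    AllRotFac w u := by
  rintro v ⟨k, rfl⟩
  rcases Nat.eq_zero_or_pos u.length with h0 | h0
  · rw [List.length_eq_zero_iff.1 h0, List.rotate_nil]
    exact ⟨0, rfl⟩
  · rw [← List.rotate_mod]
    exact h _ (Nat.mod_lt _ h0)

theorem allRotFac_of_append_self_mem_fac (h : u ++ u ∈ Fac w) : AllRotFac w u := by
  refine allRotFac_of_forall_rotate fun k hk => mem_fac_of_isInfix h ?_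
  rw [List.rotate_eq_drop_append_take hk.le]
  refine ⟨u.take k, u.drop k, ?_⟩
  conv_rhs => rw [← List.take_append_drop k u]
  simp only [List.append_assoc]

theorem mk_eq_mk_iff_isRotated :
    (⟦u⟧ : Quotient (List.IsRotated.setoid α)) = ⟦v⟧ ↔ u ~r v :=
  Quotient.eq

def lieClasses (w : ℕ → α) (n : ℕ) : Set (Quotient (List.IsRotated.setoid α)) :=
  {q | ∃ u, ⟦u⟧ = q ∧ u.length = n ∧ AllRotFac w u}

theorem lieComplexity_eq_ncard (n : ℕ) : LieComplexity w n = (lieClasses w n).ncard := rfl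

theorem mk_mem_lieClasses_iff {n : ℕ} :
    ⟦u⟧ ∈ lieClasses w n ↔ u.length = n ∧ AllRotFac w u := by
  refine ⟨?_, fun ⟨hn, hu⟩ => ⟨u, rfl, hn, hu⟩⟩
  rintro ⟨v, hvu, rfl, hv⟩
  have hvu : v ~r u := Quotient.exact hvu
  exact ⟨hvu.perm.length_eq.symm, hv.of_isRotated hvu⟩

theorem mk_mem_lieClasses_of_append_self_mem_fac (h : u ++ u ∈ Fac w) :
    ⟦u⟧ ∈ lieClasses w u.length :=
  mk_mem_lieClasses_iff.2 ⟨rfl, allRotFac_of_append_self_mem_fac h⟩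

end Factors

section ThueMorse

theorem thueMorse_le_one (n : ℕ) : thueMorse n ≤ 1 :=
  Nat.le_of_lt_succ (Nat.mod_lt _ two_pos)

theorem thueMorse_two_mul (n : ℕ) : thueMorse (2 * n) = thueMorse n := by
  rcases Nat.eq_zero_or_pos n with rfl | hn
  · rfl
  · unfold thueMorse
    rw [Nat.digits_def' (by norm_num) (by omega)]
    simp

theorem thueMorse_two_mul_add_one (n : ℕ) : thueMorse (2 * n + 1) = 1 - thueMorse n := by
  unfold thueMorse
  rw [Nat.digits_def' (by norm_num) (by omega)]
  simp only [Nat.mul_add_mod_self_left, Nat.mod_succ, Nat.mul_add_div two_pos, Nat.reduceDiv,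
    add_zero, List.count_cons_self]
  omega

theorem thueMorse_ne_succ_of_even {i : ℕ} (hi : Even i) : thueMorse i ≠ thueMorse (i + 1) := by
  obtain ⟨m, rfl⟩ := hi
  rw [← two_mul, thueMorse_two_mul, thueMorse_two_mul_add_one]
  have := thueMorse_le_one m
  omega

theorem thueMorse_ne_of_eq_succ (m : ℕ) (h : thueMorse m = thueMorse (m + 1)) :
    thueMorse (m + 1) ≠ thueMorse (m + 2) := by
  rcases Nat.even_or_odd m with hm | hm
  · exact absurd h (thueMorse_ne_succ_of_even hm)
  · exact thueMorse_ne_succ_of_even hm.add_one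

theorem thueMorse_exists_eq_succ (i : ℕ) :
    ∃ s < 4, thueMorse (i + s) = thueMorse (i + s + 1) := by
  obtain ⟨m, hm⟩ : ∃ m, 2 * m + 1 = i ∨ 2 * m = i := ⟨i / 2, by omega⟩
  -- if `t` alternated on `2m+1, …, 2m+4`, then `t m = t (m+1) = t (m+2)`
  suffices thueMorse (2 * m + 1) = thueMorse (2 * m + 2) ∨
      thueMorse (2 * m + 3) = thueMorse (2 * m + 4) by
    rcases hm with rfl | rfl
    · exact this.elim (fun h => ⟨0, by omega, h⟩) fun h => ⟨2, by omega, h⟩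
    · exact this.elim (fun h => ⟨1, by omega, h⟩) fun h => ⟨3, by omega, h⟩
  rw [show 2 * m + 2 = 2 * (m + 1) by ring, show 2 * m + 3 = 2 * (m + 1) + 1 by ring,
    show 2 * m + 4 = 2 * (m + 2) by ring]
  simp only [thueMorse_two_mul, thueMorse_two_mul_add_one]
  have := thueMorse_ne_of_eq_succ m
  have := thueMorse_le_one m
  have := thueMorse_le_one (m + 1)
  have := thueMorse_le_one (m + 2)
  omega

end ThueMorse

section FactorsOfThueMorse

variable {u : List ℕ}

theorem le_one_of_mem_fac (hu : u ∈ Fac thueMorse) {x : ℕ} (hx : x ∈ u) : x ≤ 1 := by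
  obtain ⟨i, hi⟩ := hu
  obtain ⟨k, hk, rfl⟩ := List.getElem_of_mem hx
  rw [hi.getElem_eq hk]
  exact thueMorse_le_one _

theorem FactorAt.odd_of_getElem_eq {j a : ℕ} (hj : FactorAt thueMorse j u)
    (ha : a + 1 < u.length) (heq : u[a] = u[a + 1]) : Odd (j + a) := by
  by_contra hev
  rw [hj.getElem_eq, hj.getElem_eq, ← add_assoc] at heq
  exact thueMorse_ne_succ_of_even (Nat.not_odd_iff_even.1 hev) heq

theorem getElem_ne_succ_of_getElem_eq (hu : u ∈ Fac thueMorse) {a b : ℕ}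
    (ha : a + 1 < u.length) (hb : b + 1 < u.length) (heq : u[a] = u[a + 1])
    (hab : Odd (a + b)) : u[b] ≠ u[b + 1] := by
  obtain ⟨j, hj⟩ := hu
  have hja := hj.odd_of_getElem_eq ha heq
  rw [hj.getElem_eq, hj.getElem_eq, ← add_assoc]
  refine thueMorse_ne_succ_of_even ?_
  have := hja.add_odd hab
  rw [show j + a + (a + b) = (j + b) + 2 * a by ring] at this
  exact (Nat.even_add.1 this).2 (even_two_mul a)

theorem exists_getElem_eq_succ_of_mem_fac (hu : u ∈ Fac thueMorse) (h5 : 5 ≤ u.length) :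
    ∃ i, ∃ hi : i + 1 < u.length, u[i] = u[i + 1] := by
  obtain ⟨j, hj⟩ := hu
  obtain ⟨s, hs, heq⟩ := thueMorse_exists_eq_succ j
  exact ⟨s, by omega, by rw [hj.getElem_eq, hj.getElem_eq, ← add_assoc, heq]⟩

theorem not_isInfix_cube_of_mem_fac (hu : u ∈ Fac thueMorse) (x : ℕ) :
    ¬ [x, x, x] <:+: u := by
  intro hx
  obtain ⟨j, hj⟩ := mem_fac_of_isInfix hu hx
  have h0 := hj.getElem_eq (k := 0) (by simp)
  have h1 := hj.getElem_eq (k := 1) (by simp)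
  have h2 := hj.getElem_eq (k := 2) (by simp)
  simp only [List.getElem_cons_zero, List.getElem_cons_succ, add_zero] at h0 h1 h2
  exact thueMorse_ne_of_eq_succ j (h0.symm.trans h1) (h1.symm.trans h2)

theorem notMem_fac_11001100 : [1, 1, 0, 0, 1, 1, 0, 0] ∉ Fac thueMorse := by
  rintro ⟨j, hj⟩
  have ht : ∀ k (hk : k < 8), thueMorse (j + k) = [1, 1, 0, 0, 1, 1, 0, 0][k] :=
    fun k hk => (hj.getElem_eq hk).symm
  obtain ⟨m, rfl⟩ : Odd j := by simpa using hj.odd_of_getElem_eq (a := 0) (by simp) rfl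
  -- desubstituting the occurrence at the odd position `2m + 1` gives `t m ⋯ t (m+4) = 01010`
  have key : ∀ r ≤ 4, thueMorse (m + r) = r % 2 := by
    intro r hr
    rcases Nat.eq_zero_or_pos r with rfl | hr0
    · have h0 := ht 0 (by norm_num)
      have := thueMorse_le_one m
      simp only [add_zero, thueMorse_two_mul_add_one, List.getElem_cons_zero] at h0
      simp only [add_zero, Nat.zero_mod]
      omega
    · rw [← thueMorse_two_mul, show 2 * (m + r) = 2 * m + 1 + (2 * r - 1) by omega,
        ht _ (by omega)]
      interval_cases r <;> rfl
  obtain ⟨s, hs, heq⟩ := thueMorse_exists_eq_succ m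
  have := key s (by omega)
  have := key (s + 1) (by omega)
  rw [add_assoc] at heq
  omega

end FactorsOfThueMorse

section Morphism

def mu : List ℕ → List ℕ
  | [] => []
  | a :: l => a :: (1 - a) :: mu l

@[simp] theorem mu_nil : mu [] = [] := rfl

@[simp] theorem mu_cons (a : ℕ) (l : List ℕ) : mu (a :: l) = a :: (1 - a) :: mu l := rfl

@[simp] theorem length_mu (l : List ℕ) : (mu l).length = 2 * l.length := by
  induction l with
  | nil => rfl
  | cons a l ih =>
    simp only [mu_cons, List.length_cons, ih]
    ring

@[simp] theorem mu_append (l l' : List ℕ) : mu (l ++ l') = mu l ++ mu l' := by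
  induction l with
  | nil => rfl
  | cons a l ih => simp [ih]

theorem getElem_mu_two_mul (l : List ℕ) {s : ℕ} (hs : 2 * s < (mu l).length) :
    (mu l)[2 * s] = l[s]'(by simp at hs; omega) := by
  induction l generalizing s with
  | nil => simp at hs
  | cons a l ih =>
    cases s with
    | zero => simp
    | succ s => simp [Nat.mul_succ, ih]

theorem getElem_mu_two_mul_add_one (l : List ℕ) {s : ℕ} (hs : 2 * s + 1 < (mu l).length) :
    (mu l)[2 * s + 1] = 1 - l[s]'(by simp at hs; omega) := by
  induction l generalizing s with
  | nil => simp at hs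
  | cons a l ih =>
    cases s with
    | zero => simp
    | succ s => simp [Nat.mul_succ, ih]

theorem getElem_mu_two_mul_ne (l : List ℕ) {s : ℕ} (hs : 2 * s + 1 < (mu l).length) :
    (mu l)[2 * s] ≠ (mu l)[2 * s + 1] := by
  rw [getElem_mu_two_mul, getElem_mu_two_mul_add_one]
  omega

theorem mu_injective : Function.Injective mu := by
  intro x
  induction x with
  | nil => rintro (_ | _) h <;> simp_all
  | cons a x ih =>
    rintro (_ | ⟨b, y⟩) h
    · simp at h
    · simp only [mu_cons, List.cons.injEq] at h
      rw [h.1, ih h.2.2]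

theorem mu_rotate (l : List ℕ) (q : ℕ) : mu (l.rotate q) = (mu l).rotate (2 * q) := by
  induction q with
  | zero => simp
  | succ q ih =>
    rw [← List.rotate_rotate, show 2 * (q + 1) = 2 * q + 2 by ring, ← List.rotate_rotate,
      ← ih]
    rcases l.rotate q with _ | ⟨a, l'⟩ <;> simp

theorem List.IsRotated.mu {x y : List ℕ} (h : x ~r y) : mu x ~r mu y := by
  obtain ⟨q, rfl⟩ := h
  exact ⟨2 * q, (mu_rotate x q).symm⟩

theorem FactorAt.two_mul_mu {i : ℕ} {u : List ℕ} (h : FactorAt thueMorse i u) :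
    FactorAt thueMorse (2 * i) (mu u) := by
  refine factorAt_iff_getElem.2 fun k hk => ?_
  obtain ⟨s, rfl | rfl⟩ := Nat.even_or_odd' k
  · rw [getElem_mu_two_mul, h.getElem_eq, ← mul_add, thueMorse_two_mul]
  · rw [getElem_mu_two_mul_add_one, h.getElem_eq, ← add_assoc, ← mul_add,
      thueMorse_two_mul_add_one]

theorem FactorAt.of_two_mul_mu {i : ℕ} {u : List ℕ} (h : FactorAt thueMorse (2 * i) (mu u)) :
    FactorAt thueMorse i u := by
  refine factorAt_iff_getElem.2 fun k hk => ?_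
  have h2k : 2 * k < (mu u).length := by simp; omega
  rw [← thueMorse_two_mul, mul_add, ← h.getElem_eq h2k, getElem_mu_two_mul]

theorem mu_append_self_mem_fac {x : List ℕ} (h : x ++ x ∈ Fac thueMorse) :
    mu x ++ mu x ∈ Fac thueMorse :=
  let ⟨i, hi⟩ := h
  ⟨2 * i, mu_append x x ▸ hi.two_mul_mu⟩

theorem exists_mu_eq : ∀ {w : List ℕ}, (∀ x ∈ w, x ≤ 1) → Even w.length →
    (∀ i (hi : i + 1 < w.length), Even i → w[i] ≠ w[i + 1]) → ∃ v, mu v = w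
  | [], _, _, _ => ⟨[], rfl⟩
  | [_], _, hev, _ => absurd hev (by simp)
  | a :: b :: w, hbin, hev, hne => by
    obtain ⟨v, rfl⟩ := exists_mu_eq (w := w) (fun x hx => hbin x (by simp [hx]))
      (by simpa [Nat.even_add_one] using hev)
      fun i hi hie => hne (i + 2) (by simp; omega) (by simpa [Nat.even_add])
    refine ⟨a :: v, ?_⟩
    have hab : a ≠ b := hne 0 (by simp) ⟨0, rfl⟩
    have := hbin a (by simp)
    have := hbin b (by simp)
    simp only [mu_cons, List.cons.injEq, and_true, true_and]
    omega

theorem exists_cube_prefix_of_mu_rotate_one_eq_mu {x y : List ℕ} (hx : ∀ a ∈ x, a ≤ 1)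
    (h3 : 3 ≤ x.length) (h : (mu x).rotate 1 = mu y) : ∃ a, [a, a, a] <+: x := by
  have hlen : x.length = y.length := by simpa using congrArg List.length h
  match x, y, h3, hlen with
  | a :: b :: c :: x, y₀ :: y₁ :: y, _, _ =>
    simp only [mu_cons, List.rotate_cons_succ, List.rotate_zero, List.cons_append,
      List.cons.injEq] at h
    have := hx a (by simp)
    have := hx b (by simp)
    exact ⟨a, x, by simp; omega⟩

end Morphism

section Desubstitution

theorem AllRotFac.getElem_ne_succ {w : List ℕ} (hw : AllRotFac thueMorse w)
    (h3 : 3 ≤ w.length) (hwrap : w[w.length - 1] = w[0]) {i : ℕ} (hi : i + 1 < w.length)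
    (hpar : Even i ∨ Odd w.length) : w[i] ≠ w[i + 1] := by
  have hcase : (i % 2 = 0 ∧ i + 2 < w.length) ∨ (1 ≤ i ∧ (w.length - i) % 2 = 0) := by
    rw [Nat.even_iff, Nat.odd_iff] at hpar
    omega
  rcases hcase with ⟨hie, hin⟩ | ⟨hi1, hni⟩
  · -- in `w.rotate (w.length - 1)` the wrapping pair sits at `0`, the pair at `i` at `i + 1`
    have key := getElem_ne_succ_of_getElem_eq (hw.rotate_mem_fac (w.length - 1)) (a := 0)
      (b := i + 1) (by simp; omega) (by simp; omega) ?_ (Nat.odd_iff.2 (by omega))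
    · rwa [List.getElem_rotate_of_add_eq_add_length (j := i) (by omega) (by omega) (by omega),
        List.getElem_rotate_of_add_eq_add_length (j := i + 1) (by omega) (by omega)
        (by omega)] at key
    · rwa [List.getElem_rotate_of_add_eq (j := w.length - 1) (by omega) (by omega) (by omega),
        List.getElem_rotate_of_add_eq_add_length (j := 0) (by omega) (by omega) (by omega)]
  · -- in `w.rotate i` the pair at `i` sits at `0`, the wrapping pair at `w.length - 1 - i`
    have key := getElem_ne_succ_of_getElem_eq (hw.rotate_mem_fac i) (a := w.length - 1 - i)
      (b := 0) (by simp; omega) (by simp; omega) ?_ (Nat.odd_iff.2 (by omega))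
    · rwa [List.getElem_rotate_of_add_eq (j := i) (by omega) (by omega) (by omega),
        List.getElem_rotate_of_add_eq (j := i + 1) (by omega) (by omega) (by omega)] at key
    · rwa [List.getElem_rotate_of_add_eq (j := w.length - 1) (by omega) (by omega) (by omega),
        List.getElem_rotate_of_add_eq_add_length (j := 0) (by omega) (by omega) (by omega)]

theorem AllRotFac.of_mu {v : List ℕ} (h : AllRotFac thueMorse (mu v)) (h3 : 3 ≤ v.length) :
    AllRotFac thueMorse v := by
  intro v' hv'
  obtain ⟨j, hj⟩ := h (mu v') hv'.mu
  obtain ⟨i, rfl | rfl⟩ := Nat.even_or_odd' j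
  · exact ⟨i, hj.of_two_mul_mu⟩
  · -- an odd occurrence of `mu v'` cannot contain an equal adjacent pair at all
    have hlen : 5 ≤ (mu v').length := by simp [← hv'.perm.length_eq]; omega
    obtain ⟨s, hs, heq⟩ := exists_getElem_eq_succ_of_mem_fac ⟨_, hj⟩ hlen
    obtain ⟨m, rfl⟩ : Even s :=
      (Nat.odd_add.1 (hj.odd_of_getElem_eq hs heq)).1 (odd_two_mul_add_one i)
    simp only [← two_mul] at heq
    exact absurd heq (getElem_mu_two_mul_ne v' (by omega))

theorem AllRotFac.exists_isRotated_mu {u : List ℕ} (hu : AllRotFac thueMorse u)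
    (h5 : 5 ≤ u.length) : ∃ v, u ~r mu v ∧ AllRotFac thueMorse v := by
  obtain ⟨p, hp, hpeq⟩ := exists_getElem_eq_succ_of_mem_fac hu.mem_fac h5
  set w := u.rotate (p + 1)
  have hw : AllRotFac thueMorse w := hu.of_isRotated ⟨p + 1, rfl⟩
  have hlen : w.length = u.length := u.length_rotate _
  have hwrap : w[w.length - 1] = w[0] := by
    rw [List.getElem_rotate_of_add_eq_add_length (j := p) (by omega) (by omega) (by omega),
      List.getElem_rotate_of_add_eq (j := p + 1) (by omega) (by omega) (by omega), hpeq]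
  rcases Nat.even_or_odd u.length with hev | hodd
  · obtain ⟨v, hv⟩ := exists_mu_eq (fun x hx => le_one_of_mem_fac hw.mem_fac hx) (hlen ▸ hev)
      fun i hi hie => hw.getElem_ne_succ (by omega) hwrap hi (Or.inl hie)
    have hvlen : 2 * v.length = u.length := by rw [← hlen, ← hv, length_mu]
    exact ⟨v, hv ▸ ⟨p + 1, rfl⟩, (hv ▸ hw).of_mu (by omega)⟩
  · obtain ⟨i, hi, heq⟩ := exists_getElem_eq_succ_of_mem_fac hw.mem_fac (by omega)
    exact absurd heq (hw.getElem_ne_succ (by omega) hwrap hi (Or.inr (hlen ▸ hodd)))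

end Desubstitution

section Classes

def muClass : Quotient (List.IsRotated.setoid ℕ) → Quotient (List.IsRotated.setoid ℕ) :=
  Quotient.map mu fun _ _ => List.IsRotated.mu

@[simp] theorem muClass_mk (u : List ℕ) : muClass ⟦u⟧ = ⟦mu u⟧ := rfl

theorem lieClasses_subset_image_muClass {n : ℕ} (h5 : 5 ≤ n) :
    lieClasses thueMorse n ⊆ muClass '' lieClasses thueMorse (n / 2) := by
  rintro _ ⟨u, rfl, rfl, hu⟩
  obtain ⟨v, huv, hv⟩ := hu.exists_isRotated_mu h5
  refine ⟨⟦v⟧, mk_mem_lieClasses_iff.2 ⟨?_, hv⟩, Quotient.sound huv.symm⟩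
  rw [huv.perm.length_eq, length_mu]
  omega

theorem lieClasses_eq_empty_of_odd {n : ℕ} (h5 : 5 ≤ n) (hn : Odd n) :
    lieClasses thueMorse n = ∅ := by
  refine Set.eq_empty_of_forall_notMem ?_
  rintro _ ⟨u, rfl, rfl, hu⟩
  obtain ⟨v, huv, -⟩ := hu.exists_isRotated_mu h5
  rw [huv.perm.length_eq, length_mu] at hn
  exact Nat.not_even_iff_odd.2 hn (even_two_mul _)

theorem lieClasses_two_pow_mul_eq_empty {m : ℕ} (hm : Odd m) (h5 : 5 ≤ m) (a : ℕ) :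
    lieClasses thueMorse (2 ^ a * m) = ∅ := by
  induction a with
  | zero => simpa using lieClasses_eq_empty_of_odd h5 hm
  | succ a ih =>
    have h : 2 ^ (a + 1) * m = 2 * (2 ^ a * m) := by ring
    have := lieClasses_subset_image_muClass (n := 2 ^ (a + 1) * m)
      (h5.trans (Nat.le_mul_of_pos_left m (by positivity)))
    rwa [h, Nat.mul_div_cancel_left _ two_pos, ih, Set.image_empty, Set.subset_empty_iff,
      ← h] at this

theorem muClass_injOn {n : ℕ} (h3 : 3 ≤ n) : Set.InjOn muClass (lieClasses thueMorse n) := by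
  rintro _ ⟨x, rfl, hxn, hx⟩ _ ⟨y, rfl, -, -⟩ hxy
  obtain ⟨r, hr⟩ : mu x ~r mu y := Quotient.exact hxy
  obtain ⟨q, rfl | rfl⟩ := Nat.even_or_odd' r
  · rw [← mu_rotate] at hr
    exact Quotient.sound ⟨q, mu_injective hr⟩
  · -- an odd shift would make `x.rotate q` start with a cube
    rw [← List.rotate_rotate, ← mu_rotate] at hr
    have hxq := hx.rotate_mem_fac q
    obtain ⟨a, ha⟩ := exists_cube_prefix_of_mu_rotate_one_eq_mu
      (fun a ha => le_one_of_mem_fac hxq ha) (by simp; omega) hr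
    exact absurd ha.isInfix (not_isInfix_cube_of_mem_fac hxq a)

def HasSquareRepresentatives (n : ℕ) : Prop :=
  ∀ q ∈ lieClasses thueMorse n, ∃ x, ⟦x⟧ = q ∧ x ++ x ∈ Fac thueMorse

theorem lieClasses_two_mul_eq_image {m : ℕ} (h3 : 3 ≤ m) (hsq : HasSquareRepresentatives m) :
    lieClasses thueMorse (2 * m) = muClass '' lieClasses thueMorse m := by
  refine ((lieClasses_subset_image_muClass (by omega)).trans_eq ?_).antisymm ?_
  · rw [Nat.mul_div_cancel_left _ two_pos]
  · rintro _ ⟨q, hq, rfl⟩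
    obtain ⟨x, rfl, hxx⟩ := hsq q hq
    rw [muClass_mk, ← (mk_mem_lieClasses_iff.1 hq).1, ← length_mu]
    exact mk_mem_lieClasses_of_append_self_mem_fac (mu_append_self_mem_fac hxx)

theorem HasSquareRepresentatives.two_mul {m : ℕ} (h3 : 3 ≤ m)
    (hsq : HasSquareRepresentatives m) : HasSquareRepresentatives (2 * m) := by
  rw [HasSquareRepresentatives, lieClasses_two_mul_eq_image h3 hsq]
  rintro _ ⟨q, hq, rfl⟩
  obtain ⟨x, rfl, hxx⟩ := hsq q hq
  exact ⟨mu x, rfl, mu_append_self_mem_fac hxx⟩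

theorem HasSquareRepresentatives.two_pow_mul {m : ℕ} (h3 : 3 ≤ m)
    (hsq : HasSquareRepresentatives m) (k : ℕ) : HasSquareRepresentatives (2 ^ k * m) := by
  induction k with
  | zero => simpa using hsq
  | succ k ih =>
    rw [pow_succ, mul_comm _ 2, mul_assoc]
    exact ih.two_mul (h3.trans (Nat.le_mul_of_pos_left m (by positivity)))

theorem lieComplexity_two_pow_mul {m : ℕ} (h3 : 3 ≤ m) (hsq : HasSquareRepresentatives m)
    (k : ℕ) : LieComplexity thueMorse (2 ^ k * m) = LieComplexity thueMorse m := by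
  induction k with
  | zero => simp
  | succ k ih =>
    have h3k : 3 ≤ 2 ^ k * m := h3.trans (Nat.le_mul_of_pos_left m (by positivity))
    rw [← ih, pow_succ, mul_comm _ 2, mul_assoc, lieComplexity_eq_ncard, lieComplexity_eq_ncard,
      lieClasses_two_mul_eq_image h3k (hsq.two_pow_mul h3 k), (muClass_injOn h3k).ncard_image]

end Classes

section SmallLengths

theorem allRotFac_of_forall_isInfix {u : List ℕ} (n : ℕ)
    (h : ∀ v ∈ u.cyclicPermutations, v <:+: (List.range n).map thueMorse) :
    AllRotFac thueMorse u := fun v hv =>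
  mem_fac_of_isInfix (map_range_mem_fac _ n) (h v (List.mem_cyclicPermutations_iff.2 hv.symm))

theorem lieClasses_zero : lieClasses thueMorse 0 = {⟦[]⟧} := by
  refine subset_antisymm ?_ (Set.singleton_subset_iff.2 ?_)
  · rintro _ ⟨u, rfl, hu, -⟩
    rw [List.length_eq_zero_iff.1 hu]
    rfl
  · exact mk_mem_lieClasses_iff.2 ⟨rfl, allRotFac_of_forall_isInfix 0 (by decide)⟩

theorem lieClasses_one : lieClasses thueMorse 1 = {⟦[0]⟧, ⟦[1]⟧} := by
  refine subset_antisymm ?_ (Set.insert_subset_iff.2 ⟨?_, Set.singleton_subset_iff.2 ?_⟩)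
  · rintro _ ⟨u, rfl, hu, hfac⟩
    obtain ⟨a, rfl⟩ := List.length_eq_one_iff.1 hu
    have ha : a ≤ 1 := le_one_of_mem_fac hfac.mem_fac (by simp)
    simp only [Set.mem_insert_iff, Set.mem_singleton_iff, mk_eq_mk_iff_isRotated]
    interval_cases a <;> decide
  all_goals exact mk_mem_lieClasses_iff.2 ⟨rfl, allRotFac_of_forall_isInfix 2 (by decide)⟩

theorem lieClasses_two : lieClasses thueMorse 2 = {⟦[0, 0]⟧, ⟦[0, 1]⟧, ⟦[1, 1]⟧} := by
  refine subset_antisymm ?_ (Set.insert_subset_iff.2 ⟨?_, Set.insert_subset_iff.2 ⟨?_,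
    Set.singleton_subset_iff.2 ?_⟩⟩)
  · rintro _ ⟨u, rfl, hu, hfac⟩
    obtain ⟨a, b, rfl⟩ := List.length_eq_two.1 hu
    obtain ⟨ha, hb⟩ : a ≤ 1 ∧ b ≤ 1 := by
      simpa using fun x (hx : x ∈ [a, b]) => le_one_of_mem_fac hfac.mem_fac hx
    simp only [Set.mem_insert_iff, Set.mem_singleton_iff, mk_eq_mk_iff_isRotated]
    interval_cases a <;> interval_cases b <;> decide
  all_goals exact mk_mem_lieClasses_iff.2 ⟨rfl, allRotFac_of_forall_isInfix 8 (by decide)⟩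

theorem lieClasses_three : lieClasses thueMorse 3 = {⟦[0, 1, 0]⟧, ⟦[1, 0, 1]⟧} := by
  refine subset_antisymm ?_ (Set.insert_subset_iff.2 ⟨?_, Set.singleton_subset_iff.2 ?_⟩)
  · rintro _ ⟨u, rfl, hu, hfac⟩
    obtain ⟨a, b, c, rfl⟩ := List.length_eq_three.1 hu
    obtain ⟨ha, hb, hc⟩ : a ≤ 1 ∧ b ≤ 1 ∧ c ≤ 1 := by
      simpa using fun x (hx : x ∈ [a, b, c]) => le_one_of_mem_fac hfac.mem_fac hx
    have hcube : ∀ k < 3, ∀ x < 2, ¬ [x, x, x] <:+: [a, b, c].rotate k :=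
      fun k _ x _ => not_isInfix_cube_of_mem_fac (hfac.rotate_mem_fac k) x
    simp only [Set.mem_insert_iff, Set.mem_singleton_iff, mk_eq_mk_iff_isRotated]
    revert hcube
    interval_cases a <;> interval_cases b <;> interval_cases c <;> decide
  all_goals exact mk_mem_lieClasses_iff.2 ⟨rfl, allRotFac_of_forall_isInfix 8 (by decide)⟩

theorem lieClasses_four : lieClasses thueMorse 4 = {⟦[1, 0, 0, 1]⟧, ⟦[0, 1, 0, 1]⟧} := by
  refine subset_antisymm ?_ (Set.insert_subset_iff.2 ⟨?_, Set.singleton_subset_iff.2 ?_⟩)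
  · rintro _ ⟨u, rfl, hu, hfac⟩
    obtain ⟨a, b, c, d, rfl⟩ := List.length_eq_four.1 hu
    obtain ⟨ha, hb, hc, hd⟩ : a ≤ 1 ∧ b ≤ 1 ∧ c ≤ 1 ∧ d ≤ 1 := by
      simpa using fun x (hx : x ∈ [a, b, c, d]) => le_one_of_mem_fac hfac.mem_fac hx
    have hcube : ∀ k < 4, ∀ x < 2, ¬ [x, x, x] <:+: [a, b, c, d].rotate k :=
      fun k _ x _ => not_isInfix_cube_of_mem_fac (hfac.rotate_mem_fac k) x
    simp only [Set.mem_insert_iff, Set.mem_singleton_iff, mk_eq_mk_iff_isRotated]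
    revert hcube
    interval_cases a <;> interval_cases b <;> interval_cases c <;> interval_cases d <;> decide
  all_goals exact mk_mem_lieClasses_iff.2 ⟨rfl, allRotFac_of_forall_isInfix 16 (by decide)⟩

theorem lieClasses_eight : lieClasses thueMorse 8 = {⟦mu [1, 0, 0, 1]⟧} := by
  refine subset_antisymm (fun q hq => ?_) (Set.singleton_subset_iff.2 ?_)
  · obtain ⟨_, hq', rfl⟩ := lieClasses_subset_image_muClass (by norm_num) hq
    rw [show 8 / 2 = 4 from rfl, lieClasses_four] at hq'
    rcases hq' with rfl | rfl
    · rfl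
    · exact absurd ((mk_mem_lieClasses_iff.1 hq).2.rotate_mem_fac 1) notMem_fac_11001100
  · exact mk_mem_lieClasses_of_append_self_mem_fac
      (mu_append_self_mem_fac (mem_fac_of_isInfix (map_range_mem_fac _ 16) (by decide)))

theorem hasSquareRepresentatives_three : HasSquareRepresentatives 3 := by
  rw [HasSquareRepresentatives, lieClasses_three]
  rintro _ (rfl | rfl)
  all_goals exact ⟨_, rfl, mem_fac_of_isInfix (map_range_mem_fac _ 32) (by decide)⟩

theorem hasSquareRepresentatives_eight : HasSquareRepresentatives 8 := by
  rw [HasSquareRepresentatives, lieClasses_eight]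
  rintro _ rfl
  exact ⟨_, rfl,
    mu_append_self_mem_fac (mem_fac_of_isInfix (map_range_mem_fac _ 16) (by decide))⟩

end SmallLengths

theorem lie_thueMorse (n : ℕ) :
    ((n = 0 ∨ ∃ k : ℕ, 3 ≤ k ∧ n = 2 ^ k) → LieComplexity thueMorse n = 1) ∧
    ((n = 1 ∨ n = 4 ∨ ∃ k : ℕ, n = 3 * 2 ^ k) → LieComplexity thueMorse n = 2) ∧
    (n = 2 → LieComplexity thueMorse n = 3) ∧
    (¬ (n = 0 ∨ (∃ k : ℕ, 3 ≤ k ∧ n = 2 ^ k) ∨ n = 1 ∨ n = 4 ∨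
        (∃ k : ℕ, n = 3 * 2 ^ k) ∨ n = 2) → LieComplexity thueMorse n = 0) := by
  refine ⟨?_, ?_, ?_, fun hn => ?_⟩
  · rintro (rfl | ⟨k, hk, rfl⟩)
    · rw [lieComplexity_eq_ncard, lieClasses_zero, Set.ncard_singleton]
    · obtain ⟨k, rfl⟩ := Nat.exists_eq_add_of_le' hk
      rw [pow_add, show 2 ^ 3 = 8 from rfl,
        lieComplexity_two_pow_mul (by norm_num) hasSquareRepresentatives_eight,
        lieComplexity_eq_ncard, lieClasses_eight, Set.ncard_singleton]
  · rintro (rfl | rfl | ⟨k, rfl⟩)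
    · rw [lieComplexity_eq_ncard, lieClasses_one, Set.ncard_pair (by decide)]
    · rw [lieComplexity_eq_ncard, lieClasses_four, Set.ncard_pair (by decide)]
    · rw [mul_comm, lieComplexity_two_pow_mul le_rfl hasSquareRepresentatives_three,
        lieComplexity_eq_ncard, lieClasses_three, Set.ncard_pair (by decide)]
  · rintro rfl
    rw [lieComplexity_eq_ncard, lieClasses_two, Set.ncard_eq_three]
    exact ⟨_, _, _, by decide, by decide, by decide, rfl⟩
  · push Not at hn
    obtain ⟨hn0, hpow, hn1, hn4, hpow3, hn2⟩ := hn
    obtain ⟨a, m, hm, h5, rfl⟩ := Nat.exists_eq_two_pow_mul_odd_of_ne hn0 (fun k => by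
      rcases Nat.lt_or_ge k 3 with hk | hk
      · interval_cases k <;> assumption
      · exact hpow k hk) hpow3
    rw [lieComplexity_eq_ncard, lieClasses_two_pow_mul_eq_empty hm h5 a, Set.ncard_empty]
end
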